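/- (Bäcklund transformation s₀ for Painlevé III′.) Let (q, p, H) solve the Painlevé III′ Hamiltonian system with parameters v1, v2 ∈ ℂ on an open set U ⊆ ℂ with 0 ∉ U, and assume q(s) ≠ 0 for all s ∈ U. Define p̃(s) := (q(s)/s)·( q(s)·(p(s) − 1) − (v1 − v2)/2 ) + 1 and q̃(s) := −s/q(s). Then (q̃, p̃) solves the Painlevé III′ Hamiltonian system with parameters (−1−v2, −1−v1) on U, and its Hamiltonian H̃ satisfies s·H̃(s) = s·H(s) − q(s)·(p(s) − 1) + ((v1 − v2)/2)·(1 + (v1 + v2)/2) for all s ∈ U. -/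

import Mathlib

/-! Both systems are explicit first-order ODEs `s·q' = ∂(sH)/∂p`, `s·p' = -∂(sH)/∂q`. So it
suffices to differentiate `q̃ = -s/q` and `p̃` by the chain rule, substitute the equations for `q'`
and `p'`, and recognise the vector field with parameters `(-1 - v2, -1 - v1)` at `(q̃, p̃)`; this,
like the relation between the Hamiltonians, is an identity of rational functions in `s, q, p`. -/

open Complex

/-- `(q, p, H)` solves the Painlevé III′ Hamiltonian system with parameters
`v1, v2` on an open set `U ⊆ ℂ` with `0 ∉ U`. -/
def SolvesPIII' (v1 v2 : ℂ) (U : Set ℂ) (q p H : ℂ → ℂ) : Prop :=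
  IsOpen U ∧ (0 : ℂ) ∉ U ∧
    DifferentiableOn ℂ q U ∧ DifferentiableOn ℂ p U ∧
    (∀ s ∈ U, s * H s =
      q s ^ 2 * p s ^ 2 - (q s ^ 2 + v1 * q s - s) * p s
        + (1 / 2) * (v1 + v2) * q s) ∧
    (∀ s ∈ U, s * deriv q s = 2 * q s ^ 2 * p s - q s ^ 2 - v1 * q s + s) ∧
    (∀ s ∈ U, s * deriv p s =
      -2 * q s * p s ^ 2 + 2 * q s * p s + v1 * p s - (1 / 2) * (v1 + v2))

namespace PainleveIIIprime

noncomputable section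

def sHamiltonian (v1 v2 s q p : ℂ) : ℂ :=
  q ^ 2 * p ^ 2 - (q ^ 2 + v1 * q - s) * p + (1 / 2) * (v1 + v2) * q

def sDerivQ (v1 s q p : ℂ) : ℂ := 2 * q ^ 2 * p - q ^ 2 - v1 * q + s

def sDerivP (v1 v2 q p : ℂ) : ℂ := -2 * q * p ^ 2 + 2 * q * p + v1 * p - (1 / 2) * (v1 + v2)

def backlundS0Q (s q : ℂ) : ℂ := -s / q

def backlundS0P (v1 v2 s q p : ℂ) : ℂ := q / s * (q * (p - 1) - (v1 - v2) / 2) + 1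

end

theorem sHamiltonian_backlundS0 {v1 v2 s q : ℂ} (p : ℂ) (hs : s ≠ 0) (hq : q ≠ 0) :
    sHamiltonian (-1 - v2) (-1 - v1) s (backlundS0Q s q) (backlundS0P v1 v2 s q p) =
      sHamiltonian v1 v2 s q p - q * (p - 1) + (v1 - v2) / 2 * (1 + (v1 + v2) / 2) := by
  simp only [sHamiltonian, backlundS0Q, backlundS0P]
  field_simp
  ring

end PainleveIIIprime

open PainleveIIIprime

namespace SolvesPIII'

variable {v1 v2 : ℂ} {U : Set ℂ} {q p H : ℂ → ℂ} {s : ℂ}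

theorem ne_zero (h : SolvesPIII' v1 v2 U q p H) (hs : s ∈ U) : s ≠ 0 :=
  fun h0 => h.2.1 (h0 ▸ hs)

theorem hasDerivAt_q (h : SolvesPIII' v1 v2 U q p H) (hs : s ∈ U) :
    HasDerivAt q (sDerivQ v1 s (q s) (p s) / s) s := by
  have hs0 := h.ne_zero hs
  obtain ⟨hU, -, hq, -, -, hq', -⟩ := h
  rw [sDerivQ, ← hq' s hs, mul_div_cancel_left₀ _ hs0]
  exact ((hq s hs).differentiableAt (hU.mem_nhds hs)).hasDerivAt

theorem hasDerivAt_p (h : SolvesPIII' v1 v2 U q p H) (hs : s ∈ U) :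
    HasDerivAt p (sDerivP v1 v2 (q s) (p s) / s) s := by
  have hs0 := h.ne_zero hs
  obtain ⟨hU, -, -, hp, -, -, hp'⟩ := h
  rw [sDerivP, ← hp' s hs, mul_div_cancel_left₀ _ hs0]
  exact ((hp s hs).differentiableAt (hU.mem_nhds hs)).hasDerivAt

theorem of_hasDerivAt (hU : IsOpen U) (h0 : (0 : ℂ) ∉ U)
    (hq : ∀ s ∈ U, HasDerivAt q (sDerivQ v1 s (q s) (p s) / s) s)
    (hp : ∀ s ∈ U, HasDerivAt p (sDerivP v1 v2 (q s) (p s) / s) s) :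
    SolvesPIII' v1 v2 U q p (fun s => sHamiltonian v1 v2 s (q s) (p s) / s) := by
  have hs0 : ∀ s ∈ U, s ≠ 0 := fun s hs h => h0 (h ▸ hs)
  refine ⟨hU, h0, fun s hs => (hq s hs).differentiableAt.differentiableWithinAt,
    fun s hs => (hp s hs).differentiableAt.differentiableWithinAt,
    fun s hs => mul_div_cancel₀ _ (hs0 s hs), fun s hs => ?_, fun s hs => ?_⟩
  · rw [(hq s hs).deriv, mul_div_cancel₀ _ (hs0 s hs), sDerivQ]
  · rw [(hp s hs).deriv, mul_div_cancel₀ _ (hs0 s hs), sDerivP]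

theorem hasDerivAt_backlundS0Q (h : SolvesPIII' v1 v2 U q p H) (hs : s ∈ U) (hq : q s ≠ 0) :
    HasDerivAt (fun t => backlundS0Q t (q t))
      (sDerivQ (-1 - v2) s (backlundS0Q s (q s)) (backlundS0P v1 v2 s (q s) (p s)) / s) s := by
  have hs0 := h.ne_zero hs
  refine ((hasDerivAt_neg s).fun_div (h.hasDerivAt_q hs) hq).congr_deriv ?_
  simp only [sDerivQ, backlundS0Q, backlundS0P]
  field_simp
  ring

theorem hasDerivAt_backlundS0P (h : SolvesPIII' v1 v2 U q p H) (hs : s ∈ U) (hq : q s ≠ 0) :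
    HasDerivAt (fun t => backlundS0P v1 v2 t (q t) (p t))
      (sDerivP (-1 - v2) (-1 - v1) (backlundS0Q s (q s)) (backlundS0P v1 v2 s (q s) (p s)) / s)
      s := by
  have hs0 := h.ne_zero hs
  refine (((h.hasDerivAt_q hs).fun_div (hasDerivAt_id' s) hs0).fun_mul
    (((h.hasDerivAt_q hs).fun_mul ((h.hasDerivAt_p hs).sub_const 1)).sub_const
      ((v1 - v2) / 2))).add_const 1 |>.congr_deriv ?_
  simp only [sDerivQ, sDerivP, backlundS0Q, backlundS0P]
  field_simp
  ring

end SolvesPIII'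

/-- Bäcklund transformation `s₀` for Painlevé III′:
`p̃ = (q/s)(q(p−1) − (v1−v2)/2) + 1`, `q̃ = −s/q` solves the system with
parameters `(−1−v2, −1−v1)`, and
`s·H̃(s) = s·H(s) − q(p−1) + ((v1−v2)/2)(1 + (v1+v2)/2)`. -/
theorem painleveIIIprime_backlund_s0 (v1 v2 : ℂ) (U : Set ℂ)
    (q p H : ℂ → ℂ)
    (hsol : SolvesPIII' v1 v2 U q p H)
    (hq : ∀ s ∈ U, q s ≠ 0)
    (qt pt : ℂ → ℂ)
    (hpt : ∀ s ∈ U, pt s =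
      (q s / s) * (q s * (p s - 1) - (v1 - v2) / 2) + 1)
    (hqt : ∀ s ∈ U, qt s = -s / q s) :
    ∃ Ht : ℂ → ℂ,
      SolvesPIII' (-1 - v2) (-1 - v1) U qt pt Ht ∧
      ∀ s ∈ U, s * Ht s =
        s * H s - q s * (p s - 1) + ((v1 - v2) / 2) * (1 + (v1 + v2) / 2) := by
  have ⟨hU, h0, _, _, hH, _, _⟩ := hsol
  have hqt' : ∀ s ∈ U, HasDerivAt qt (sDerivQ (-1 - v2) s (qt s) (pt s) / s) s := by
    intro s hs
    rw [hqt s hs, hpt s hs]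
    exact (hsol.hasDerivAt_backlundS0Q hs (hq s hs)).congr_of_eventuallyEq
      (Filter.eventuallyEq_of_mem (hU.mem_nhds hs) hqt)
  have hpt' : ∀ s ∈ U, HasDerivAt pt (sDerivP (-1 - v2) (-1 - v1) (qt s) (pt s) / s) s := by
    intro s hs
    rw [hqt s hs, hpt s hs]
    exact (hsol.hasDerivAt_backlundS0P hs (hq s hs)).congr_of_eventuallyEq
      (Filter.eventuallyEq_of_mem (hU.mem_nhds hs) hpt)
  refine ⟨_, .of_hasDerivAt hU h0 hqt' hpt', fun s hs => ?_⟩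
  rw [mul_div_cancel₀ _ (hsol.ne_zero hs), hqt s hs, hpt s hs, hH s hs]
  exact sHamiltonian_backlundS0 _ (hsol.ne_zero hs) (hq s hs)
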